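/- arXiv:2508.20739 — 2 statements merged into one kernel-verified Lean document; each statement's English description precedes it below -/
import Mathlib

section
/- Given an ERS Ɛ and a graph X colored by the colors of Ɛ, let X' be the full ERS expansion of X. Then the VERS expansion (with respect to the associated VERS R_Ɛ) of the barycentric subdivision of X equals the barycentric subdivision of X'. Consequently, for every n ≥ 1, the n-th VERS expansion Γ_n of R_Ɛ is the barycentric subdivision of the n-th graph Ɛ_n of the full expansion sequence of Ɛ. -/
/-- A graph colored by `C`. -/
structure Gph (C : Type) where
  V : Type
  Ed : Type
  src : Ed → V
  tgt : Ed → V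
  col : Ed → C

section ERS

variable {C : Type} (E₀ : Gph C) (X : C → Gph C)
  (ic tc : ∀ c, (X c).V) [∀ c, DecidableEq (X c).V]

def ersAttach (Y : Gph C) (e : Y.Ed) (w : (X (Y.col e)).V) :
    Y.V ⊕ (Σ e : Y.Ed, { v : (X (Y.col e)).V // v ≠ ic (Y.col e) ∧ v ≠ tc (Y.col e) }) :=
  if h1 : w = ic (Y.col e) then Sum.inl (Y.src e)
  else if h2 : w = tc (Y.col e) then Sum.inl (Y.tgt e)
  else Sum.inr ⟨e, w, h1, h2⟩

/-- The full ERS expansion of a colored graph. -/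
def ersExpand (Y : Gph C) : Gph C where
  V := Y.V ⊕ (Σ e : Y.Ed, { v : (X (Y.col e)).V // v ≠ ic (Y.col e) ∧ v ≠ tc (Y.col e) })
  Ed := Σ e : Y.Ed, (X (Y.col e)).Ed
  src := fun p => ersAttach X ic tc Y p.1 ((X (Y.col p.1)).src p.2)
  tgt := fun p => ersAttach X ic tc Y p.1 ((X (Y.col p.1)).tgt p.2)
  col := fun p => (X (Y.col p.1)).col p.2

/-- The full expansion sequence `Ɛ₁, Ɛ₂, …` (`ersIter k = Ɛ_{k+1}`). -/
def ersIter : ℕ → Gph C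
  | 0 => E₀
  | k + 1 => ersExpand X ic tc (ersIter k)

/-- Belk–Forrest's expanding conditions. -/
def ExpandingERS : Prop :=
  (∀ v : E₀.V, ∃ e, E₀.src e = v ∨ E₀.tgt e = v) ∧
  (∀ c, ∀ v : (X c).V, ∃ e, (X c).src e = v ∨ (X c).tgt e = v) ∧
  (∀ c, ∃ v : (X c).V, v ≠ ic c ∧ v ≠ tc c) ∧
  (∀ c, ∀ e : (X c).Ed,
    ¬ (((X c).src e = ic c ∧ (X c).tgt e = tc c) ∨
      ((X c).src e = tc c ∧ (X c).tgt e = ic c)))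

end ERS

/-- Colors of the VERS `R_Ɛ`: `none` is `c₀`, `some (inl c)` is `c_ι` and
`some (inr c)` is `c_τ`. -/
abbrev VCol (C : Type) : Type := Option (C ⊕ C)

/-- Types of the VERS `R_Ɛ`: `none` is the start type `s`, `some none` is the
vertex type, `some (some c)` is the type `c`. -/
abbrev VTyp (C : Type) : Type := Option (Option C)

/-- A graph colored by the VERS colors and typed by the VERS types. -/
structure VGraph (C : Type) where
  V : Type
  Ed : Type
  src : Ed → V
  tgt : Ed → V
  col : Ed → VCol C
  typ : V → VTyp C

/-- `κ`-compatibility for the VERS `R_Ɛ`: `c₀` joins `s` to `s`, `c_ι` joins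
the vertex type to `c`, and `c_τ` joins `c` to the vertex type. -/
def VCompat {C : Type} (G : VGraph C) : Prop :=
  ∀ e, match G.col e with
  | none => G.typ (G.src e) = none ∧ G.typ (G.tgt e) = none
  | some (Sum.inl c) => G.typ (G.src e) = some none ∧ G.typ (G.tgt e) = some (some c)
  | some (Sum.inr c) => G.typ (G.src e) = some (some c) ∧ G.typ (G.tgt e) = some none

/-- The letters of the initial edge shift of `R_Ɛ`. -/
def LetterRaw {C : Type} (E₀ : Gph C) (X : C → Gph C) (ic tc : ∀ c, (X c).V) : Type :=
  (E₀.V ⊕ E₀.Ed) ⊕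
    (Unit ⊕ Σ c : C, ({ v : (X c).V // v ≠ ic c ∧ v ≠ tc c } ⊕ (X c).Ed))

/-- Which letters may follow a word of a given type. -/
def LetterOK {C : Type} {E₀ : Gph C} {X : C → Gph C} {ic tc : ∀ c, (X c).V} :
    VTyp C → LetterRaw E₀ X ic tc → Prop
  | none, Sum.inl _ => True
  | some none, Sum.inr (Sum.inl _) => True
  | some (some c), Sum.inr (Sum.inr p) => p.1 = c
  | _, _ => False

/-- The type of (a word ending with) a letter. -/
def letterTyp {C : Type} {E₀ : Gph C} {X : C → Gph C} {ic tc : ∀ c, (X c).V} :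
    LetterRaw E₀ X ic tc → VTyp C
  | Sum.inl (Sum.inl _) => some none
  | Sum.inl (Sum.inr g) => some (some (E₀.col g))
  | Sum.inr (Sum.inl _) => some none
  | Sum.inr (Sum.inr p) =>
      match p.2 with
      | Sum.inl _ => some none
      | Sum.inr g => some (some ((X p.1).col g))

/-- The vertices of the VERS expansion of `G`. -/
def VexV {C : Type} (E₀ : Gph C) (X : C → Gph C) (ic tc : ∀ c, (X c).V)
    (G : VGraph C) : Type :=
  Σ u : G.V, { x : LetterRaw E₀ X ic tc // LetterOK (G.typ u) x }

/-- The halves of the barycentric subdivision of `X c`. -/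
def halfSrcV {C : Type} (X : C → Gph C) (c : C) :
    (X c).Ed ⊕ (X c).Ed → (X c).V ⊕ (X c).Ed
  | Sum.inl g => Sum.inl ((X c).src g)
  | Sum.inr g => Sum.inr g

def halfTgtV {C : Type} (X : C → Gph C) (c : C) :
    (X c).Ed ⊕ (X c).Ed → (X c).V ⊕ (X c).Ed
  | Sum.inl g => Sum.inr g
  | Sum.inr g => Sum.inl ((X c).tgt g)

def half0Src {C : Type} (E₀ : Gph C) : E₀.Ed ⊕ E₀.Ed → E₀.V ⊕ E₀.Ed
  | Sum.inl g => Sum.inl (E₀.src g)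
  | Sum.inr g => Sum.inr g

def half0Tgt {C : Type} (E₀ : Gph C) : E₀.Ed ⊕ E₀.Ed → E₀.V ⊕ E₀.Ed
  | Sum.inl g => Sum.inr g
  | Sum.inr g => Sum.inl (E₀.tgt g)

/-- The edges of the VERS expansion of `G`. -/
inductive VexEd {C : Type} (E₀ : Gph C) (X : C → Gph C)
    (P : ∀ c : C, (X c).Ed ⊕ (X c).Ed → Bool) (G : VGraph C) : Type where
  | e0 (e : G.Ed) (hcol : G.col e = none)
      (hs : G.typ (G.src e) = none) (ht : G.typ (G.tgt e) = none)
      (f : E₀.Ed ⊕ E₀.Ed) : VexEd E₀ X P G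
  | eι (e : G.Ed) (c : C) (hcol : G.col e = some (Sum.inl c))
      (hs : G.typ (G.src e) = some none) (ht : G.typ (G.tgt e) = some (some c))
      (f : (X c).Ed ⊕ (X c).Ed) (hf : P c f = true) : VexEd E₀ X P G
  | eτ (e : G.Ed) (c : C) (hcol : G.col e = some (Sum.inr c))
      (hs : G.typ (G.src e) = some (some c)) (ht : G.typ (G.tgt e) = some none)
      (f : (X c).Ed ⊕ (X c).Ed) (hf : P c f = false) : VexEd E₀ X P G

section Attach

variable {C : Type} (E₀ : Gph C) (X : C → Gph C) (ic tc : ∀ c, (X c).V)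
  [∀ c, DecidableEq (X c).V] (Q0 : E₀.V ⊕ E₀.Ed → Bool) {G : VGraph C}

/-- Attaching an endpoint of a half-edge of `R_{c₀}`. -/
def attach0 (e : G.Ed) (hs : G.typ (G.src e) = none) (ht : G.typ (G.tgt e) = none)
    (w : E₀.V ⊕ E₀.Ed) : VexV E₀ X ic tc G :=
  ⟨if Q0 w then G.src e else G.tgt e, ⟨Sum.inl w, by
    split
    · rw [hs]; trivial
    · rw [ht]; trivial⟩⟩

/-- The letter of the new vertex produced by a vertex `x` of `X c`. -/
def attachL (c : C) (x : (X c).V) : LetterRaw E₀ X ic tc :=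
  if h1 : x = ic c then Sum.inr (Sum.inl ())
  else if h2 : x = tc c then Sum.inr (Sum.inl ())
  else Sum.inr (Sum.inr ⟨c, Sum.inl ⟨x, h1, h2⟩⟩)

theorem letterTyp_attachL (c : C) (x : (X c).V) :
    letterTyp (attachL E₀ X ic tc c x) = some none := by
  by_cases h1 : x = ic c
  · rw [show attachL E₀ X ic tc c x = Sum.inr (Sum.inl ()) from dif_pos h1]; rfl
  · by_cases h2 : x = tc c
    · rw [show attachL E₀ X ic tc c x = Sum.inr (Sum.inl ()) from
        (dif_neg h1).trans (dif_pos h2)]; rfl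
    · rw [show attachL E₀ X ic tc c x = Sum.inr (Sum.inr ⟨c, Sum.inl ⟨x, h1, h2⟩⟩) from
        (dif_neg h1).trans (dif_neg h2)]; rfl

theorem letterOK_attachL (c : C) (x : (X c).V)
    (h : ¬(x = ic c ∨ x = tc c)) :
    LetterOK (some (some c)) (attachL E₀ X ic tc c x) := by
  push_neg at h
  rw [show attachL E₀ X ic tc c x = Sum.inr (Sum.inr ⟨c, Sum.inl ⟨x, h.1, h.2⟩⟩) from
    (dif_neg h.1).trans (dif_neg h.2)]
  rfl

theorem letterOK_attachL_V (c : C) (x : (X c).V)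
    (h : x = ic c ∨ x = tc c) :
    LetterOK (C := C) (some none) (attachL E₀ X ic tc c x) := by
  unfold attachL
  rcases h with h | h <;> split_ifs <;> simp_all [LetterOK]

/-- Attaching an endpoint of a half-edge of `R_{c_ι}`. -/
def attachι (e : G.Ed) (c : C) (hs : G.typ (G.src e) = some none)
    (ht : G.typ (G.tgt e) = some (some c)) :
    (X c).V ⊕ (X c).Ed → VexV E₀ X ic tc G
  | Sum.inl x =>
      if h : x = ic c ∨ x = tc c then
        ⟨G.src e, ⟨attachL E₀ X ic tc c x, by
          rw [hs]
          exact letterOK_attachL_V E₀ X ic tc c x h⟩⟩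
      else
        ⟨G.tgt e, ⟨attachL E₀ X ic tc c x, by
          rw [ht]; exact letterOK_attachL E₀ X ic tc c x h⟩⟩
  | Sum.inr g => ⟨G.tgt e, ⟨Sum.inr (Sum.inr ⟨c, Sum.inr g⟩), by rw [ht]; rfl⟩⟩

/-- Attaching an endpoint of a half-edge of `R_{c_τ}`. -/
def attachτ (e : G.Ed) (c : C) (hs : G.typ (G.src e) = some (some c))
    (ht : G.typ (G.tgt e) = some none) :
    (X c).V ⊕ (X c).Ed → VexV E₀ X ic tc G
  | Sum.inl x =>
      if h : x = ic c ∨ x = tc c then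
        ⟨G.tgt e, ⟨attachL E₀ X ic tc c x, by
          rw [ht]
          exact letterOK_attachL_V E₀ X ic tc c x h⟩⟩
      else
        ⟨G.src e, ⟨attachL E₀ X ic tc c x, by
          rw [hs]; exact letterOK_attachL E₀ X ic tc c x h⟩⟩
  | Sum.inr g => ⟨G.src e, ⟨Sum.inr (Sum.inr ⟨c, Sum.inr g⟩), by rw [hs]; rfl⟩⟩

theorem letterTyp_attachι_vert (e : G.Ed) (c : C)
    (hs : G.typ (G.src e) = some none) (ht : G.typ (G.tgt e) = some (some c))
    (x : (X c).V) :
    letterTyp ((attachι E₀ X ic tc e c hs ht (Sum.inl x)).2.1 :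
      LetterRaw E₀ X ic tc) = some none := by
  by_cases h : x = ic c ∨ x = tc c
  · rw [show attachι E₀ X ic tc e c hs ht (Sum.inl x) = _ from dif_pos h]
    exact letterTyp_attachL E₀ X ic tc c x
  · rw [show attachι E₀ X ic tc e c hs ht (Sum.inl x) = _ from dif_neg h]
    exact letterTyp_attachL E₀ X ic tc c x

theorem letterTyp_attachτ_vert (e : G.Ed) (c : C)
    (hs : G.typ (G.src e) = some (some c)) (ht : G.typ (G.tgt e) = some none)
    (x : (X c).V) :
    letterTyp ((attachτ E₀ X ic tc e c hs ht (Sum.inl x)).2.1 :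
      LetterRaw E₀ X ic tc) = some none := by
  by_cases h : x = ic c ∨ x = tc c
  · rw [show attachτ E₀ X ic tc e c hs ht (Sum.inl x) = _ from dif_pos h]
    exact letterTyp_attachL E₀ X ic tc c x
  · rw [show attachτ E₀ X ic tc e c hs ht (Sum.inl x) = _ from dif_neg h]
    exact letterTyp_attachL E₀ X ic tc c x

end Attach

/-- The VERS expansion of a graph colored and typed as in `R_Ɛ`. -/
def vexpand2 {C : Type} (E₀ : Gph C) (X : C → Gph C) (ic tc : ∀ c, (X c).V)
    [∀ c, DecidableEq (X c).V]
    (P : ∀ c : C, (X c).Ed ⊕ (X c).Ed → Bool) (Q0 : E₀.V ⊕ E₀.Ed → Bool)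
    (G : VGraph C) : VGraph C where
  V := VexV E₀ X ic tc G
  Ed := VexEd E₀ X P G
  src := fun f =>
    match f with
    | .e0 e _ hs ht f => attach0 E₀ X ic tc Q0 e hs ht (half0Src E₀ f)
    | .eι e c _ hs ht f _ => attachι E₀ X ic tc e c hs ht (halfSrcV X c f)
    | .eτ e c _ hs ht f _ => attachτ E₀ X ic tc e c hs ht (halfSrcV X c f)
  tgt := fun f =>
    match f with
    | .e0 e _ hs ht f => attach0 E₀ X ic tc Q0 e hs ht (half0Tgt E₀ f)
    | .eι e c _ hs ht f _ => attachι E₀ X ic tc e c hs ht (halfTgtV X c f)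
    | .eτ e c _ hs ht f _ => attachτ E₀ X ic tc e c hs ht (halfTgtV X c f)
  col := fun f =>
    match f with
    | .e0 _ _ _ _ (Sum.inl g) => some (Sum.inl (E₀.col g))
    | .e0 _ _ _ _ (Sum.inr g) => some (Sum.inr (E₀.col g))
    | .eι _ c _ _ _ (Sum.inl g) _ => some (Sum.inl ((X c).col g))
    | .eι _ c _ _ _ (Sum.inr g) _ => some (Sum.inr ((X c).col g))
    | .eτ _ c _ _ _ (Sum.inl g) _ => some (Sum.inl ((X c).col g))
    | .eτ _ c _ _ _ (Sum.inr g) _ => some (Sum.inr ((X c).col g))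
  typ := fun u => letterTyp u.2.1

/-- The expansion is always `κ`-compatible. -/
theorem vcompat_vexpand2 {C : Type} (E₀ : Gph C) (X : C → Gph C)
    (ic tc : ∀ c, (X c).V) [∀ c, DecidableEq (X c).V]
    (P : ∀ c : C, (X c).Ed ⊕ (X c).Ed → Bool) (Q0 : E₀.V ⊕ E₀.Ed → Bool)
    (G : VGraph C) : VCompat (vexpand2 E₀ X ic tc P Q0 G) := by
  rintro (⟨e, hcol, hs, ht, (g | g)⟩ | ⟨e, c, hcol, hs, ht, (g | g), hf⟩ |
    ⟨e, c, hcol, hs, ht, (g | g), hf⟩) <;>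
    constructor <;>
    simp only [vexpand2, attach0, half0Src, half0Tgt, halfSrcV, halfTgtV] <;>
    first
      | rfl
      | exact letterTyp_attachι_vert E₀ X ic tc _ _ _ _ _
      | exact letterTyp_attachτ_vert E₀ X ic tc _ _ _ _ _

/-- Iterated VERS expansion. -/
def vexpandIter {C : Type} (E₀ : Gph C) (X : C → Gph C) (ic tc : ∀ c, (X c).V)
    [∀ c, DecidableEq (X c).V]
    (P : ∀ c : C, (X c).Ed ⊕ (X c).Ed → Bool) (Q0 : E₀.V ⊕ E₀.Ed → Bool) :
    ℕ → VGraph C → VGraph C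
  | 0, G => G
  | n + 1, G => vexpand2 E₀ X ic tc P Q0 (vexpandIter E₀ X ic tc P Q0 n G)

/-- The base vertex underlying a vertex of the `n`-th expansion. -/
def baseVex {C : Type} (E₀ : Gph C) (X : C → Gph C) (ic tc : ∀ c, (X c).V)
    [∀ c, DecidableEq (X c).V]
    (P : ∀ c : C, (X c).Ed ⊕ (X c).Ed → Bool) (Q0 : E₀.V ⊕ E₀.Ed → Bool) :
    (n : ℕ) → (G : VGraph C) → (vexpandIter E₀ X ic tc P Q0 n G).V → G.V
  | 0, _, v => v
  | n + 1, G, v => baseVex E₀ X ic tc P Q0 n G v.1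

/-- An isomorphism of colored typed graphs. -/
structure VIso {C : Type} (G H : VGraph C) where
  vEquiv : G.V ≃ H.V
  eEquiv : G.Ed ≃ H.Ed
  src_ok : ∀ e, H.src (eEquiv e) = vEquiv (G.src e)
  tgt_ok : ∀ e, H.tgt (eEquiv e) = vEquiv (G.tgt e)
  col_ok : ∀ e, H.col (eEquiv e) = G.col e
  typ_ok : ∀ v, H.typ (vEquiv v) = G.typ v

/-- The barycentric subdivision of a `C`-colored graph, as a graph colored by
the VERS colors `C_ι ⊕ C_τ` and typed by the VERS types. -/
def bary2 {C : Type} (Y : Gph C) : VGraph C where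
  V := Y.V ⊕ Y.Ed
  Ed := Y.Ed ⊕ Y.Ed
  src := fun f =>
    match f with
    | Sum.inl e => Sum.inl (Y.src e)
    | Sum.inr e => Sum.inr e
  tgt := fun f =>
    match f with
    | Sum.inl e => Sum.inr e
    | Sum.inr e => Sum.inl (Y.tgt e)
  col := fun f =>
    match f with
    | Sum.inl e => some (Sum.inl (Y.col e))
    | Sum.inr e => some (Sum.inr (Y.col e))
  typ := fun v =>
    match v with
    | Sum.inl _ => some none
    | Sum.inr e => some (some (Y.col e))

theorem bary2_vcompat {C : Type} (Y : Gph C) : VCompat (bary2 Y) := by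
  rintro (e | e) <;> exact ⟨rfl, rfl⟩

/-- The base graph `Γ₀` of the VERS `R_Ɛ`: a single `c₀`-colored loop. -/
def Gamma0 (C : Type) : VGraph C where
  V := PUnit
  Ed := PUnit
  src := fun _ => PUnit.unit
  tgt := fun _ => PUnit.unit
  col := fun _ => none
  typ := fun _ => none

/-!
A vertex of the VERS expansion of `bary2 Y` is a vertex `u` of `bary2 Y` together with a letter
allowed after the type of `u`. Over an original vertex the only such letter is the vertex letter;
over an edge `e` of color `c` the letters are the interior vertices and the edges of `X c`, which
are exactly the vertices and edges the ERS creates inside `e`. On edges, `P` splits the half-edges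
of the subdivision of `X c` between `R_{c_ι}`, replacing `ι(e) → e`, and `R_{c_τ}`, replacing
`e → τ(e)`, so each half-edge appears exactly once. As `R_{c_ι}` misses `τ_c`, its copy of `ι_c`
is glued to `ι(e)` and every other vertex to `e`, just as `ersAttach` glues `X c` into `e`;
symmetrically for `R_{c_τ}`. The statement about `Γₙ` follows by induction, because VERS expansion
respects isomorphism.
-/

namespace VIso

variable {C : Type} {G H K : VGraph C}

def symm (φ : VIso G H) : VIso H G where
  vEquiv := φ.vEquiv.symm
  eEquiv := φ.eEquiv.symm
  src_ok e := by rw [φ.vEquiv.eq_symm_apply, ← φ.src_ok, Equiv.apply_symm_apply]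
  tgt_ok e := by rw [φ.vEquiv.eq_symm_apply, ← φ.tgt_ok, Equiv.apply_symm_apply]
  col_ok e := by rw [← φ.col_ok, Equiv.apply_symm_apply]
  typ_ok v := by rw [← φ.typ_ok, Equiv.apply_symm_apply]

def trans (φ : VIso G H) (ψ : VIso H K) : VIso G K where
  vEquiv := φ.vEquiv.trans ψ.vEquiv
  eEquiv := φ.eEquiv.trans ψ.eEquiv
  src_ok e := by simp only [Equiv.trans_apply, ψ.src_ok, φ.src_ok]
  tgt_ok e := by simp only [Equiv.trans_apply, ψ.tgt_ok, φ.tgt_ok]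
  col_ok e := by simp only [Equiv.trans_apply, ψ.col_ok, φ.col_ok]
  typ_ok v := by simp only [Equiv.trans_apply, ψ.typ_ok, φ.typ_ok]

section Vexpand

variable (E₀ : Gph C) (X : C → Gph C) (ic tc : ∀ c, (X c).V) (φ : VIso G H)

def vexVEquiv : VexV E₀ X ic tc G ≃ VexV E₀ X ic tc H :=
  Equiv.sigmaCongr φ.vEquiv fun u => Equiv.subtypeEquivRight fun x => by rw [φ.typ_ok]

variable (P : ∀ c : C, (X c).Ed ⊕ (X c).Ed → Bool)

def vexEdMap : VexEd E₀ X P G → VexEd E₀ X P H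
  | .e0 e hcol hs ht f =>
      .e0 (φ.eEquiv e) (by rw [φ.col_ok, hcol]) (by rw [φ.src_ok, φ.typ_ok, hs])
        (by rw [φ.tgt_ok, φ.typ_ok, ht]) f
  | .eι e c hcol hs ht f hf =>
      .eι (φ.eEquiv e) c (by rw [φ.col_ok, hcol]) (by rw [φ.src_ok, φ.typ_ok, hs])
        (by rw [φ.tgt_ok, φ.typ_ok, ht]) f hf
  | .eτ e c hcol hs ht f hf =>
      .eτ (φ.eEquiv e) c (by rw [φ.col_ok, hcol]) (by rw [φ.src_ok, φ.typ_ok, hs])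
        (by rw [φ.tgt_ok, φ.typ_ok, ht]) f hf

theorem symm_vexEdMap_vexEdMap (x : VexEd E₀ X P G) :
    φ.symm.vexEdMap E₀ X P (φ.vexEdMap E₀ X P x) = x := by
  rcases x with ⟨e⟩ | ⟨e⟩ | ⟨e⟩ <;> simp [vexEdMap, VIso.symm]

def vexEdEquiv : VexEd E₀ X P G ≃ VexEd E₀ X P H where
  toFun := φ.vexEdMap E₀ X P
  invFun := φ.symm.vexEdMap E₀ X P
  left_inv := φ.symm_vexEdMap_vexEdMap E₀ X P
  right_inv := φ.symm.symm_vexEdMap_vexEdMap E₀ X P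

theorem attach0_eEquiv (Q0 : E₀.V ⊕ E₀.Ed → Bool) (e : G.Ed)
    (hs : G.typ (G.src e) = none) (ht : G.typ (G.tgt e) = none) (w : E₀.V ⊕ E₀.Ed) :
    attach0 E₀ X ic tc Q0 (φ.eEquiv e) (by rw [φ.src_ok, φ.typ_ok, hs])
      (by rw [φ.tgt_ok, φ.typ_ok, ht]) w =
      φ.vexVEquiv E₀ X ic tc (attach0 E₀ X ic tc Q0 e hs ht w) := by
  refine Sigma.subtype_ext ?_ rfl
  change (if Q0 w then H.src _ else H.tgt _) = φ.vEquiv (if Q0 w then G.src e else G.tgt e)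
  rw [apply_ite φ.vEquiv, φ.src_ok, φ.tgt_ok]

variable [∀ c, DecidableEq (X c).V]

theorem attachι_eEquiv (e : G.Ed) (c : C) (hs : G.typ (G.src e) = some none)
    (ht : G.typ (G.tgt e) = some (some c)) (w : (X c).V ⊕ (X c).Ed) :
    attachι E₀ X ic tc (φ.eEquiv e) c (by rw [φ.src_ok, φ.typ_ok, hs])
      (by rw [φ.tgt_ok, φ.typ_ok, ht]) w =
      φ.vexVEquiv E₀ X ic tc (attachι E₀ X ic tc e c hs ht w) := by
  rcases w with x | g
  · by_cases h : x = ic c ∨ x = tc c <;> simp only [attachι, h, ↓reduceDIte]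
    · exact Sigma.subtype_ext (φ.src_ok e) rfl
    · exact Sigma.subtype_ext (φ.tgt_ok e) rfl
  · exact Sigma.subtype_ext (φ.tgt_ok e) rfl

theorem attachτ_eEquiv (e : G.Ed) (c : C) (hs : G.typ (G.src e) = some (some c))
    (ht : G.typ (G.tgt e) = some none) (w : (X c).V ⊕ (X c).Ed) :
    attachτ E₀ X ic tc (φ.eEquiv e) c (by rw [φ.src_ok, φ.typ_ok, hs])
      (by rw [φ.tgt_ok, φ.typ_ok, ht]) w =
      φ.vexVEquiv E₀ X ic tc (attachτ E₀ X ic tc e c hs ht w) := by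
  rcases w with x | g
  · by_cases h : x = ic c ∨ x = tc c <;> simp only [attachτ, h, ↓reduceDIte]
    · exact Sigma.subtype_ext (φ.tgt_ok e) rfl
    · exact Sigma.subtype_ext (φ.src_ok e) rfl
  · exact Sigma.subtype_ext (φ.src_ok e) rfl

def vexpand2 (Q0 : E₀.V ⊕ E₀.Ed → Bool) :
    VIso (_root_.vexpand2 E₀ X ic tc P Q0 G) (_root_.vexpand2 E₀ X ic tc P Q0 H) where
  vEquiv := φ.vexVEquiv E₀ X ic tc
  eEquiv := φ.vexEdEquiv E₀ X P
  src_ok := by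
    rintro (⟨e, _, hs, ht⟩ | ⟨e, c, _, hs, ht⟩ | ⟨e, c, _, hs, ht⟩)
    · exact φ.attach0_eEquiv E₀ X ic tc Q0 e hs ht _
    · exact φ.attachι_eEquiv E₀ X ic tc e c hs ht _
    · exact φ.attachτ_eEquiv E₀ X ic tc e c hs ht _
  tgt_ok := by
    rintro (⟨e, _, hs, ht⟩ | ⟨e, c, _, hs, ht⟩ | ⟨e, c, _, hs, ht⟩)
    · exact φ.attach0_eEquiv E₀ X ic tc Q0 e hs ht _
    · exact φ.attachι_eEquiv E₀ X ic tc e c hs ht _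
    · exact φ.attachτ_eEquiv E₀ X ic tc e c hs ht _
  col_ok := by
    rintro (⟨e, _, _, _, g | g⟩ | ⟨e, c, _, _, _, g | g⟩ | ⟨e, c, _, _, _, g | g⟩) <;>
      rfl
  typ_ok _ := rfl

end Vexpand

end VIso

section BaryExpand

variable {C : Type} (E₀ : Gph C) (X : C → Gph C) (ic tc : ∀ c, (X c).V)
  [∀ c, DecidableEq (X c).V] (P : ∀ c : C, (X c).Ed ⊕ (X c).Ed → Bool)
  (Q0 : E₀.V ⊕ E₀.Ed → Bool)

def baryBaseIso : VIso (bary2 E₀) (vexpand2 E₀ X ic tc P Q0 (Gamma0 C)) where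
  vEquiv :=
    { toFun w := ⟨PUnit.unit, Sum.inl w, trivial⟩
      invFun
        | ⟨_, Sum.inl w, _⟩ => w
        | ⟨_, Sum.inr _, h⟩ => h.elim
      left_inv _ := rfl
      right_inv := by rintro ⟨⟨⟩, w | _, h⟩ <;> first | rfl | exact h.elim }
  eEquiv :=
    { toFun f := .e0 PUnit.unit rfl rfl rfl f
      invFun
        | .e0 _ _ _ _ f => f
        | .eι _ _ h _ _ _ _ | .eτ _ _ h _ _ _ _ => nomatch h
      left_inv _ := rfl
      right_inv := by
        rintro (⟨⟨⟩⟩ | ⟨_, _, h⟩ | ⟨_, _, h⟩) <;> first | rfl | cases h }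
  src_ok := by rintro (g | g) <;> rfl
  tgt_ok := by rintro (g | g) <;> rfl
  col_ok := by rintro (g | g) <;> rfl
  typ_ok := by rintro (v | g) <;> rfl

variable (Y : Gph C)

def baryErsExpandVEquiv : (bary2 (ersExpand X ic tc Y)).V ≃ VexV E₀ X ic tc (bary2 Y) where
  toFun
    | Sum.inl (Sum.inl v) => ⟨Sum.inl v, Sum.inr (Sum.inl ()), trivial⟩
    | Sum.inl (Sum.inr ⟨e, w⟩) =>
        ⟨Sum.inr e, Sum.inr (Sum.inr ⟨Y.col e, Sum.inl w⟩), rfl⟩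
    | Sum.inr ⟨e, g⟩ => ⟨Sum.inr e, Sum.inr (Sum.inr ⟨Y.col e, Sum.inr g⟩), rfl⟩
  invFun
    | ⟨Sum.inl v, Sum.inr (Sum.inl ()), _⟩ => Sum.inl (Sum.inl v)
    | ⟨Sum.inr e, Sum.inr (Sum.inr ⟨_, Sum.inl w⟩), rfl⟩ => Sum.inl (Sum.inr ⟨e, w⟩)
    | ⟨Sum.inr e, Sum.inr (Sum.inr ⟨_, Sum.inr g⟩), rfl⟩ => Sum.inr ⟨e, g⟩
  left_inv := by rintro ((v | ⟨e, w⟩) | ⟨e, g⟩) <;> rfl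
  right_inv := by
    rintro ⟨v | e, (_ | _ | ⟨c, w | g⟩), h⟩ <;>
      first | exact h.elim | rfl | (obtain rfl : c = Y.col e := h; rfl)

def baryReplacementVertex {e : Y.Ed} :
    (X (Y.col e)).V ⊕ (X (Y.col e)).Ed → (bary2 (ersExpand X ic tc Y)).V
  | Sum.inl x => Sum.inl (ersAttach X ic tc Y e x)
  | Sum.inr g => Sum.inr ⟨e, g⟩

theorem attachι_bary (e : Y.Ed) (w : (X (Y.col e)).V ⊕ (X (Y.col e)).Ed)
    (hw : w ≠ Sum.inl (tc (Y.col e))) :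
    attachι E₀ X ic tc (G := bary2 Y) (Sum.inl e) (Y.col e) rfl rfl w =
      baryErsExpandVEquiv E₀ X ic tc Y (baryReplacementVertex X ic tc Y w) := by
  rcases w with x | g
  · have hx : x ≠ tc (Y.col e) := fun h => hw (congrArg _ h)
    by_cases h : x = ic (Y.col e)
    · subst h
      simp only [attachι, attachL, baryReplacementVertex, ersAttach, true_or, ↓reduceDIte]
      rfl
    · simp only [attachι, attachL, baryReplacementVertex, ersAttach, h, hx, or_self,
        ↓reduceDIte]
      rfl
  · rfl

theorem attachτ_bary (e : Y.Ed) (w : (X (Y.col e)).V ⊕ (X (Y.col e)).Ed)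
    (hw : w ≠ Sum.inl (ic (Y.col e))) :
    attachτ E₀ X ic tc (G := bary2 Y) (Sum.inr e) (Y.col e) rfl rfl w =
      baryErsExpandVEquiv E₀ X ic tc Y (baryReplacementVertex X ic tc Y w) := by
  rcases w with x | g
  · have hx : x ≠ ic (Y.col e) := fun h => hw (congrArg _ h)
    by_cases h : x = tc (Y.col e)
    · subst h
      simp only [attachτ, attachL, baryReplacementVertex, ersAttach, hx, or_true, ↓reduceDIte]
      rfl
    · simp only [attachτ, attachL, baryReplacementVertex, ersAttach, h, hx, or_self,
        ↓reduceDIte]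
      rfl
  · rfl

def baryHalfEdge (e : Y.Ed) (f : (X (Y.col e)).Ed ⊕ (X (Y.col e)).Ed) :
    VexEd E₀ X P (bary2 Y) :=
  if hf : P (Y.col e) f then .eι (Sum.inl e) (Y.col e) rfl rfl rfl f hf
  else .eτ (Sum.inr e) (Y.col e) rfl rfl rfl f (Bool.eq_false_iff.mpr hf)

def baryHalfEdgeEquiv :
    (Σ e : Y.Ed, (X (Y.col e)).Ed ⊕ (X (Y.col e)).Ed) ≃ VexEd E₀ X P (bary2 Y) where
  toFun p := baryHalfEdge E₀ X P Y p.1 p.2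
  invFun
    | .eι (Sum.inl e) _ rfl _ _ f _ => ⟨e, f⟩
    | .eτ (Sum.inr e) _ rfl _ _ f _ => ⟨e, f⟩
    | .e0 (Sum.inl _) h _ _ _ | .e0 (Sum.inr _) h _ _ _
    | .eι (Sum.inr _) _ h _ _ _ _ | .eτ (Sum.inl _) _ h _ _ _ _ => nomatch h
  left_inv := by
    rintro ⟨e, f⟩
    dsimp only [baryHalfEdge]
    split_ifs <;> rfl
  right_inv := by
    rintro (⟨e | e, h⟩ | ⟨e | e, c, h, -, -, f, hf⟩ | ⟨e | e, c, h, -, -, f, hf⟩) <;> cases h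
    · exact dif_pos hf
    · exact dif_neg (Bool.eq_false_iff.mp hf)

theorem col_baryHalfEdge (e : Y.Ed) (f : (X (Y.col e)).Ed ⊕ (X (Y.col e)).Ed) :
    (vexpand2 E₀ X ic tc P Q0 (bary2 Y)).col (baryHalfEdge E₀ X P Y e f) =
      (bary2 (X (Y.col e))).col f := by
  unfold baryHalfEdge
  split_ifs <;> rcases f with g | g <;> rfl

theorem src_baryHalfEdge (e : Y.Ed) (f : (X (Y.col e)).Ed ⊕ (X (Y.col e)).Ed)
    (hι : P (Y.col e) f = true → halfSrcV X _ f ≠ Sum.inl (tc (Y.col e)))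
    (hτ : P (Y.col e) f = false → halfSrcV X _ f ≠ Sum.inl (ic (Y.col e))) :
    (vexpand2 E₀ X ic tc P Q0 (bary2 Y)).src (baryHalfEdge E₀ X P Y e f) =
      baryErsExpandVEquiv E₀ X ic tc Y (baryReplacementVertex X ic tc Y (halfSrcV X _ f)) := by
  unfold baryHalfEdge
  split_ifs with hf
  · exact attachι_bary E₀ X ic tc Y e _ (hι hf)
  · exact attachτ_bary E₀ X ic tc Y e _ (hτ (Bool.eq_false_iff.mpr hf))

theorem tgt_baryHalfEdge (e : Y.Ed) (f : (X (Y.col e)).Ed ⊕ (X (Y.col e)).Ed)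
    (hι : P (Y.col e) f = true → halfTgtV X _ f ≠ Sum.inl (tc (Y.col e)))
    (hτ : P (Y.col e) f = false → halfTgtV X _ f ≠ Sum.inl (ic (Y.col e))) :
    (vexpand2 E₀ X ic tc P Q0 (bary2 Y)).tgt (baryHalfEdge E₀ X P Y e f) =
      baryErsExpandVEquiv E₀ X ic tc Y (baryReplacementVertex X ic tc Y (halfTgtV X _ f)) := by
  unfold baryHalfEdge
  split_ifs with hf
  · exact attachι_bary E₀ X ic tc Y e _ (hι hf)
  · exact attachτ_bary E₀ X ic tc Y e _ (hτ (Bool.eq_false_iff.mpr hf))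

def baryErsExpandIso
    (hPι : ∀ c f, P c f = true →
      halfSrcV X c f ≠ Sum.inl (tc c) ∧ halfTgtV X c f ≠ Sum.inl (tc c))
    (hPτ : ∀ c f, P c f = false →
      halfSrcV X c f ≠ Sum.inl (ic c) ∧ halfTgtV X c f ≠ Sum.inl (ic c)) :
    VIso (bary2 (ersExpand X ic tc Y)) (vexpand2 E₀ X ic tc P Q0 (bary2 Y)) where
  vEquiv := baryErsExpandVEquiv E₀ X ic tc Y
  eEquiv := (Equiv.sigmaSumDistrib _ _).symm.trans (baryHalfEdgeEquiv E₀ X P Y)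
  src_ok := by
    rintro (⟨e, g⟩ | ⟨e, g⟩) <;> exact src_baryHalfEdge E₀ X ic tc P Q0 Y e _
      (fun h => (hPι _ _ h).1) (fun h => (hPτ _ _ h).1)
  tgt_ok := by
    rintro (⟨e, g⟩ | ⟨e, g⟩) <;> exact tgt_baryHalfEdge E₀ X ic tc P Q0 Y e _
      (fun h => (hPι _ _ h).2) (fun h => (hPτ _ _ h).2)
  col_ok := by
    rintro (⟨e, g⟩ | ⟨e, g⟩) <;> exact col_baryHalfEdge E₀ X ic tc P Q0 Y e _
  typ_ok := by
    rintro ((v | ⟨e, w⟩) | ⟨e, g⟩) <;> rfl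

end BaryExpand

/-- the VERS expansion of the barycentric subdivision of a
`C`-colored graph is the barycentric subdivision of its full ERS expansion;
consequently, for every `n ≥ 1`, the `n`-th VERS expansion `Γₙ` of `R_Ɛ`
is the barycentric subdivision of the `n`-th graph `Ɛₙ` of the full
expansion sequence of the ERS. -/
theorem vers_expansion_is_bary_of_ers_expansion {C : Type}
    (E₀ : Gph C) (X : C → Gph C) (ic tc : ∀ c, (X c).V)
    [∀ c, DecidableEq (X c).V]
    (P : ∀ c : C, (X c).Ed ⊕ (X c).Ed → Bool) (Q0 : E₀.V ⊕ E₀.Ed → Bool)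
    -- `R_{c_ι}` omits the terminal vertex `τ_c` and `R_{c_τ}` omits `ι_c`:
    (hPι : ∀ c f, P c f = true →
      halfSrcV X c f ≠ Sum.inl (tc c) ∧ halfTgtV X c f ≠ Sum.inl (tc c))
    (hPτ : ∀ c f, P c f = false →
      halfSrcV X c f ≠ Sum.inl (ic c) ∧ halfTgtV X c f ≠ Sum.inl (ic c)) :
    (∀ Y : Gph C,
      Nonempty (VIso (vexpand2 E₀ X ic tc P Q0 (bary2 Y))
        (bary2 (ersExpand X ic tc Y)))) ∧
    (∀ n : ℕ,
      Nonempty (VIso (vexpandIter E₀ X ic tc P Q0 (n + 1) (Gamma0 C))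
        (bary2 (ersIter E₀ X ic tc n)))) := by
  have step (Y : Gph C) :=
    (baryErsExpandIso E₀ X ic tc P Q0 Y hPι hPτ).symm
  refine ⟨fun Y => ⟨step Y⟩, fun n => ?_⟩
  induction n with
  | zero => exact ⟨(baryBaseIso E₀ X ic tc P Q0).symm⟩
  | succ n ih => exact ih.map fun φ => (φ.vexpand2 E₀ X ic tc P Q0).trans (step _)
end

section
/- Let Ɛ be an expanding ERS and R_Ɛ its associated VERS. If α = a_1a_2… and β = b_1b_2… are elements of the symbol space that are asymptotically equivalent in the history graph, then there exists N ∈ {0, 1, 2} such that the distance in Γ_k between the prefixes a_1…a_k and b_1…b_k equals N for all sufficiently large k. -/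
/-- The barycentric subdivision of a colored graph, as a simple graph (whose
vertices are the vertices and the edges of the original graph). -/
def barySG {C : Type} (Y : Gph C) : SimpleGraph (Y.V ⊕ Y.Ed) where
  Adj a b := a ≠ b ∧
    ((∃ v e, a = Sum.inl v ∧ b = Sum.inr e ∧ (Y.src e = v ∨ Y.tgt e = v)) ∨
      (∃ v e, b = Sum.inl v ∧ a = Sum.inr e ∧ (Y.src e = v ∨ Y.tgt e = v)))
  symm := ⟨by rintro a b ⟨h, h'⟩; exact ⟨h.symm, h'.symm⟩⟩
  loopless := ⟨by rintro a ⟨h, -⟩; exact h rfl⟩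

namespace SimpleGraph

variable {V W : Type*} {G : SimpleGraph V} {H : SimpleGraph W} {f : V → W}

theorem Walk.exists_map_length_le (hf : ∀ ⦃a b⦄, G.Adj a b → H.Adj (f a) (f b) ∨ f a = f b)
    {a b : V} (p : G.Walk a b) : ∃ q : H.Walk (f a) (f b), q.length ≤ p.length := by
  induction p with
  | nil => exact ⟨.nil, le_rfl⟩
  | cons h _ ih =>
    obtain ⟨q, hq⟩ := ih
    rcases hf h with h' | h'
    · exact ⟨.cons h' q, by simpa using hq⟩
    · exact ⟨q.copy h'.symm rfl, by simp; omega⟩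

theorem Walk.exists_map_length_lt (hf : ∀ ⦃a b⦄, G.Adj a b → H.Adj (f a) (f b) ∨ f a = f b)
    {a b : V} (p : G.Walk a b) {d : G.Dart} (hd : d ∈ p.darts) (hcollapse : f d.fst = f d.snd) :
    ∃ q : H.Walk (f a) (f b), q.length < p.length := by
  induction p with
  | nil => simp at hd
  | cons h p ih =>
    rw [Walk.darts_cons, List.mem_cons] at hd
    rcases hd with rfl | hd
    · obtain ⟨q, hq⟩ := p.exists_map_length_le hf
      exact ⟨q.copy hcollapse.symm rfl, by simp; omega⟩
    · obtain ⟨q, hq⟩ := ih hd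
      rcases hf h with h' | h'
      · exact ⟨.cons h' q, by simpa using hq⟩
      · exact ⟨q.copy h'.symm rfl, by simp; omega⟩

theorem Reachable.map_of_adj_or_eq (hf : ∀ ⦃a b⦄, G.Adj a b → H.Adj (f a) (f b) ∨ f a = f b)
    {a b : V} (h : G.Reachable a b) : H.Reachable (f a) (f b) :=
  let ⟨p⟩ := h
  ⟨(p.exists_map_length_le hf).choose⟩

theorem Reachable.dist_map_le_of_adj_or_eq
    (hf : ∀ ⦃a b⦄, G.Adj a b → H.Adj (f a) (f b) ∨ f a = f b) {a b : V} (h : G.Reachable a b) :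
    H.dist (f a) (f b) ≤ G.dist a b := by
  obtain ⟨p, hp⟩ := h.exists_walk_length_eq_dist
  obtain ⟨q, hq⟩ := p.exists_map_length_le hf
  exact (dist_le q).trans (hq.trans hp.le)

end SimpleGraph

theorem Nat.exists_forall_ge_eq_of_monotone {u : ℕ → ℕ} (hu : Monotone u) {D : ℕ}
    (hD : ∀ k, u k ≤ D) : ∃ M, ∀ k, M ≤ k → u k = u M := by
  have hbdd : BddAbove (Set.range u) := ⟨D, Set.forall_mem_range.2 hD⟩
  obtain ⟨M, hM⟩ := Nat.sSup_mem (Set.range_nonempty u) hbdd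
  exact ⟨M, fun k hk => le_antisymm (hM ▸ le_csSup hbdd ⟨k, rfl⟩) (hu hk)⟩

def NoEdgeJoiningEnds {C : Type} (X : C → Gph C) (ic tc : ∀ c, (X c).V) : Prop :=
  ∀ c, ∀ g : (X c).Ed,
    ¬ (((X c).src g = ic c ∧ (X c).tgt g = tc c) ∨ ((X c).src g = tc c ∧ (X c).tgt g = ic c))

section Barycentric

variable {C : Type} {Y : Gph C}

@[simp]
theorem barySG_adj_inl_inr {v : Y.V} {e : Y.Ed} :
    (barySG Y).Adj (.inl v) (.inr e) ↔ Y.src e = v ∨ Y.tgt e = v := by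
  simp [barySG]

@[simp]
theorem not_barySG_adj_inl_inl {v w : Y.V} : ¬ (barySG Y).Adj (.inl v) (.inl w) := by
  simp [barySG]

@[simp]
theorem not_barySG_adj_inr_inr {e f : Y.Ed} : ¬ (barySG Y).Adj (.inr e) (.inr f) := by
  simp [barySG]

end Barycentric

section Projection

open SimpleGraph

variable {C : Type} {X : C → Gph C} {ic tc : ∀ c, (X c).V} [∀ c, DecidableEq (X c).V]
  {Y : Gph C}

/-- The map `Γ_{k+1} → Γ_k` collapsing each copy of `X_c` onto the barycentre of the edge it
replaces. -/
def ersProj (Y : Gph C) :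
    (ersExpand X ic tc Y).V ⊕ (ersExpand X ic tc Y).Ed → Y.V ⊕ Y.Ed
  | .inl (.inl v) => .inl v
  | .inl (.inr p) => .inr p.1
  | .inr p => .inr p.1

theorem ersProj_attach_adj_or_eq (e : Y.Ed) (w : (X (Y.col e)).V) :
    (barySG Y).Adj (ersProj Y (.inl (ersAttach X ic tc Y e w))) (.inr e) ∨
      ersProj Y (.inl (ersAttach X ic tc Y e w)) = .inr e := by
  unfold ersAttach
  split_ifs <;> simp [ersProj]

theorem ersProj_attach_eq_or (e : Y.Ed) (w : (X (Y.col e)).V) :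
    ersProj Y (.inl (ersAttach X ic tc Y e w)) = .inr e ∨ w = ic (Y.col e) ∨ w = tc (Y.col e) := by
  unfold ersAttach
  split_ifs <;> simp_all [ersProj]

theorem barySG_ersProj_adj_or_eq ⦃a b : (ersExpand X ic tc Y).V ⊕ (ersExpand X ic tc Y).Ed⦄
    (h : (barySG (ersExpand X ic tc Y)).Adj a b) :
    (barySG Y).Adj (ersProj Y a) (ersProj Y b) ∨ ersProj Y a = ersProj Y b := by
  have of_inl_inr : ∀ (v : (ersExpand X ic tc Y).V) (F : (ersExpand X ic tc Y).Ed),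
      (barySG _).Adj (.inl v) (.inr F) →
      (barySG Y).Adj (ersProj Y (.inl v)) (ersProj Y (.inr F)) ∨
        ersProj Y (.inl v) = ersProj Y (.inr F) := by
    rintro v ⟨e, f⟩ h
    rcases barySG_adj_inl_inr.1 h with rfl | rfl <;> exact ersProj_attach_adj_or_eq e _
  rcases a with u | A <;> rcases b with v | B
  · simp at h
  · exact of_inl_inr u B h
  · exact (of_inl_inr v A h.symm).imp Adj.symm Eq.symm
  · simp at h

theorem ersProj_eq_or_ersProj_eq (hno : NoEdgeJoiningEnds X ic tc)
    {F : (ersExpand X ic tc Y).Ed} {u₁ u₂ : (ersExpand X ic tc Y).V}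
    (h₁ : (barySG _).Adj (.inl u₁) (.inr F)) (h₂ : (barySG _).Adj (.inl u₂) (.inr F))
    (hne : u₁ ≠ u₂) :
    ersProj Y (.inl u₁) = ersProj Y (.inr F) ∨ ersProj Y (.inl u₂) = ersProj Y (.inr F) := by
  obtain ⟨e, f⟩ := F
  have endpoint : ∀ u, (barySG (ersExpand X ic tc Y)).Adj (.inl u) (.inr ⟨e, f⟩) →
      ∃ w, (w = (X (Y.col e)).src f ∨ w = (X (Y.col e)).tgt f) ∧ ersAttach X ic tc Y e w = u := by
    intro u h
    rcases barySG_adj_inl_inr.1 h with h | h <;> exact ⟨_, by simp, h⟩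
  obtain ⟨w₁, hw₁, rfl⟩ := endpoint u₁ h₁
  obtain ⟨w₂, hw₂, rfl⟩ := endpoint u₂ h₂
  rcases ersProj_attach_eq_or e w₁ with h | hw₁'
  · exact .inl h
  rcases ersProj_attach_eq_or e w₂ with h | hw₂'
  · exact .inr h
  -- both endpoints are glued to `ι` or `τ`, and they differ, so `f` joins `ι` to `τ`
  exfalso
  have hw : w₁ ≠ w₂ := by rintro rfl; exact hne rfl
  apply hno _ f
  grind

theorem SimpleGraph.Walk.exists_dart_ersProj_eq (hno : NoEdgeJoiningEnds X ic tc)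
    {A : (ersExpand X ic tc Y).Ed} {b : (ersExpand X ic tc Y).V ⊕ (ersExpand X ic tc Y).Ed}
    (p : (barySG (ersExpand X ic tc Y)).Walk (.inr A) b) (hp : p.IsPath) (h3 : 3 ≤ p.length) :
    ∃ d ∈ p.darts, ersProj Y d.fst = ersProj Y d.snd := by
  rcases p with _ | @⟨_, x₁, _, h₁, _ | @⟨_, x₂, _, h₂, _ | @⟨_, x₃, _, h₃, p⟩⟩⟩
  · simp at h3
  · simp at h3
  · simp at h3
  rcases x₁ with u₁ | _
  case inr => simp at h₁
  rcases x₂ with _ | F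
  case inl => simp at h₂
  rcases x₃ with u₂ | _
  case inr => simp at h₃
  have hne : u₁ ≠ u₂ := by
    rintro rfl
    simp [Walk.cons_isPath_iff] at hp
  rcases ersProj_eq_or_ersProj_eq hno h₂ h₃.symm hne with h | h
  · exact ⟨⟨(_, _), h₂⟩, by simp, h⟩
  · exact ⟨⟨(_, _), h₃⟩, by simp, h.symm⟩

theorem SimpleGraph.Reachable.dist_ersProj_lt (hno : NoEdgeJoiningEnds X ic tc)
    {A B : (ersExpand X ic tc Y).Ed}
    (h : (barySG (ersExpand X ic tc Y)).Reachable (.inr A) (.inr B))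
    (h3 : 3 ≤ (barySG (ersExpand X ic tc Y)).dist (.inr A) (.inr B)) :
    (barySG Y).dist (.inr A.1) (.inr B.1) <
      (barySG (ersExpand X ic tc Y)).dist (.inr A) (.inr B) := by
  obtain ⟨p, hp, hlen⟩ := h.exists_path_of_dist
  obtain ⟨d, hd, hcollapse⟩ := p.exists_dart_ersProj_eq hno hp (hlen ▸ h3)
  obtain ⟨q, hq⟩ := p.exists_map_length_lt barySG_ersProj_adj_or_eq hd hcollapse
  exact (dist_le q).trans_lt (hlen ▸ hq)

theorem SimpleGraph.Reachable.dist_ersProj_le {A B : (ersExpand X ic tc Y).Ed}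
    (h : (barySG (ersExpand X ic tc Y)).Reachable (.inr A) (.inr B)) :
    (barySG Y).dist (.inr A.1) (.inr B.1) ≤
      (barySG (ersExpand X ic tc Y)).dist (.inr A) (.inr B) :=
  h.dist_map_le_of_adj_or_eq barySG_ersProj_adj_or_eq

theorem SimpleGraph.Reachable.ersProj {A B : (ersExpand X ic tc Y).Ed}
    (h : (barySG (ersExpand X ic tc Y)).Reachable (.inr A) (.inr B)) :
    (barySG Y).Reachable (.inr A.1) (.inr B.1) :=
  h.map_of_adj_or_eq barySG_ersProj_adj_or_eq

end Projection

/-- for an expanding ERS, if two elements of the symbol space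
are asymptotically equivalent (their equal-length prefixes, viewed as
vertices of the level graphs `Γ_k` — the barycentric subdivisions of the full
expansions `Ɛ_k` — stay at uniformly bounded distance), then their prefix
distances are eventually constant, equal to some `N ∈ {0, 1, 2}`. -/
theorem symbol_space_asymptotic_distance {C : Type}
    (E₀ : Gph C) (X : C → Gph C) (ic tc : ∀ c, (X c).V)
    [∀ c, DecidableEq (X c).V]
    (hexp : ExpandingERS E₀ X ic tc)
    -- an element of the symbol space: a compatible sequence of edges
    (α β : ∀ k, (ersIter E₀ X ic tc k).Ed)
    (hα : ∀ k, (α (k + 1)).1 = α k) (hβ : ∀ k, (β (k + 1)).1 = β k)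
    (hasymp : ∃ D : ℕ, ∀ k,
      (barySG (ersIter E₀ X ic tc k)).dist (Sum.inr (α k)) (Sum.inr (β k)) ≤ D) :
    ∃ N : ℕ, N ≤ 2 ∧ ∃ M : ℕ, ∀ k, M ≤ k →
      (barySG (ersIter E₀ X ic tc k)).dist (Sum.inr (α k)) (Sum.inr (β k)) = N := by
  obtain ⟨D, hD⟩ := hasymp
  set d : ℕ → ℕ := fun k => (barySG (ersIter E₀ X ic tc k)).dist (.inr (α k)) (.inr (β k))
  by_cases hreach : ∀ k,
      (barySG (ersIter E₀ X ic tc k)).Reachable (Sum.inr (α k)) (Sum.inr (β k))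
  · have hmono : ∀ k, d k ≤ d (k + 1) := fun k => by
      have h := (hreach (k + 1)).dist_ersProj_le
      rwa [hα, hβ] at h
    obtain ⟨M, hM⟩ := Nat.exists_forall_ge_eq_of_monotone (monotone_nat_of_le_succ hmono) hD
    refine ⟨d M, ?_, M, hM⟩
    by_contra! h3
    have hstable := hM (M + 1) M.le_succ
    have hlt := (hreach (M + 1)).dist_ersProj_lt hexp.2.2.2 (show 3 ≤ d (M + 1) by omega)
    rw [hα, hβ] at hlt
    exact hlt.ne' hstable
  · obtain ⟨k₀, hk₀⟩ := not_forall.1 hreach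
    refine ⟨0, zero_le_two, k₀, fun k hk => SimpleGraph.dist_eq_zero_of_not_reachable ?_⟩
    induction k, hk using Nat.le_induction with
    | base => exact hk₀
    | succ k _ ih => exact fun h => ih (hα k ▸ hβ k ▸ h.ersProj)
end
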